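/- For every integer m ≥ 1 and every p in (0,1), the quantity R_m(p) = (5/3)·(π^{-1/2} 2^{1/2-p})·(log(π(m+3/2)))^{1-p/2}/(π(m+3/2)) · (2^p + 2π^p ∑_{k=1}^m k^p) is strictly greater than 1. -/

import Mathlib

/-!
Write `L = log (π (m + 3/2))` and `S = ∑ k^p`. Since
`2^(1/2-p) (2^p + 2 π^p S) = √2 (1 + 2 (π/2)^p S)`, the claim reads
`π (m + 3/2) < (5/3) √(2/π) L^(1-p/2) (1 + 2 (π/2)^p S)`.

For `m ≥ 2` drop the `1` and write `L^(1-p/2) (π/2)^p = L b^p` with `b = π / (2√L)`.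
Then `b^p S ≥ m`: for `m = 2` because `b ≥ 1`; for `m ≥ 3` because `S ≥ m^(p+1)/(p+1)`
(compare with `∫₀^m x^p`) and `b m ≥ e`, so that `(b m)^p ≥ e^p ≥ 1 + p`.
What is left, `π (m + 3/2) < (10/3) √(2/π) m L`, is numerical.

For `m = 1` the inequality is tightest as `p → 1`, and every `p < 1` reduces to `p = 1`:
as a function of `t = 1 - p`, `L^(t/2) (1 + π (2/π)^t)` is a sum of two exponentials in `t`,
and its tangent line at `t = 0` has nonnegative slope.
-/

open Real Finset

lemma add_le_mul_exp_add_mul_exp {c₁ c₂ a₁ a₂ t : ℝ} (hc₁ : 0 ≤ c₁) (hc₂ : 0 ≤ c₂)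
    (ha : 0 ≤ c₁ * a₁ + c₂ * a₂) (ht : 0 ≤ t) :
    c₁ + c₂ ≤ c₁ * exp (a₁ * t) + c₂ * exp (a₂ * t) := by
  have h₁ := mul_le_mul_of_nonneg_left (add_one_le_exp (a₁ * t)) hc₁
  have h₂ := mul_le_mul_of_nonneg_left (add_one_le_exp (a₂ * t)) hc₂
  nlinarith [mul_nonneg ha ht]

lemma log_le_natCast_mul_log_two_add (n : ℕ) {x : ℝ} (hx : 0 < x) :
    log x ≤ n * log 2 + (x / 2 ^ n - 1) := by
  have h := log_le_sub_one_of_pos (x := x / 2 ^ n) (by positivity)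
  rw [log_div hx.ne' (by positivity), log_pow] at h
  linarith

lemma natCast_mul_log_two_add_le_log (n : ℕ) {x : ℝ} (hx : 0 < x) :
    n * log 2 + (1 - 2 ^ n / x) ≤ log x := by
  have h := one_sub_inv_le_log_of_pos (x := x / 2 ^ n) (by positivity)
  rw [log_div hx.ne' (by positivity), log_pow, inv_div] at h
  linarith

lemma rpow_one_sub_half_mul_rpow {L x : ℝ} (hL : 0 < L) (hx : 0 ≤ x) (p : ℝ) :
    L ^ (1 - p / 2) * x ^ p = L * (x / √L) ^ p := by
  rw [div_rpow hx (sqrt_nonneg L), sqrt_eq_rpow, ← rpow_mul hL.le, rpow_sub hL, rpow_one]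
  ring_nf

lemma rpow_neg_half_mul_two_rpow_mul_add {x : ℝ} (hx : 0 < x) (p S : ℝ) :
    x ^ (-(1:ℝ)/2) * 2 ^ ((1:ℝ)/2 - p) * (2 ^ p + 2 * x ^ p * S) =
      √(2 / x) * (1 + 2 * (x / 2) ^ p * S) := by
  have h2p : (2:ℝ) ^ ((1:ℝ)/2 - p) * 2 ^ p = √2 := by
    rw [← rpow_add two_pos, sqrt_eq_rpow]; ring_nf
  rw [sqrt_div' _ hx.le, div_rpow hx.le zero_le_two, sqrt_eq_rpow x,
    show -(1:ℝ)/2 = -(1/2) by ring, rpow_neg hx.le, ← h2p]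
  field_simp

lemma natCast_le_sum_Icc_rpow {p : ℝ} (hp : 0 ≤ p) (m : ℕ) :
    (m : ℝ) ≤ ∑ k ∈ Icc 1 m, (k : ℝ) ^ p := by
  have h := card_nsmul_le_sum (Icc 1 m) (fun k : ℕ ↦ (k : ℝ) ^ p) 1 fun k hk ↦
    one_le_rpow (by exact_mod_cast (mem_Icc.1 hk).1) hp
  simpa using h

lemma rpow_add_one_div_le_sum_Icc_rpow {p : ℝ} (hp : 0 ≤ p) (m : ℕ) :
    (m : ℝ) ^ (p + 1) / (p + 1) ≤ ∑ k ∈ Icc 1 m, (k : ℝ) ^ p := by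
  have hmono : MonotoneOn (fun x : ℝ ↦ x ^ p) (Set.Icc 0 (0 + m)) := fun x hx y _ hxy ↦
    rpow_le_rpow hx.1 hxy hp
  have h := hmono.integral_le_sum
  rw [zero_add, integral_rpow (Or.inl (by linarith)), zero_rpow (by linarith), sub_zero] at h
  convert h using 1
  rw [← Ico_add_one_right_eq_Icc, sum_Ico_eq_sum_range]
  simp [add_comm]

lemma natCast_le_rpow_mul_sum_of_one_le {b p : ℝ} (hb : 1 ≤ b) (hp : 0 ≤ p) (m : ℕ) :
    (m : ℝ) ≤ b ^ p * ∑ k ∈ Icc 1 m, (k : ℝ) ^ p := by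
  have hS := natCast_le_sum_Icc_rpow hp m
  nlinarith [one_le_rpow hb hp]

lemma natCast_le_rpow_mul_sum_of_exp_one_le {b p : ℝ} {m : ℕ} (hbm : exp 1 ≤ b * m)
    (hb : 0 ≤ b) (hp : 0 ≤ p) :
    (m : ℝ) ≤ b ^ p * ∑ k ∈ Icc 1 m, (k : ℝ) ^ p := by
  have hm : (0 : ℝ) < m := by
    by_contra! h
    nlinarith [exp_pos 1]
  have hgrowth : p + 1 ≤ (b * m) ^ p := by
    calc p + 1 ≤ exp p := add_one_le_exp p
      _ = exp 1 ^ p := (exp_one_rpow p).symm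
      _ ≤ (b * m) ^ p := rpow_le_rpow (exp_pos 1).le hbm hp
  calc (m : ℝ) ≤ m * ((b * m) ^ p / (p + 1)) := by
        apply le_mul_of_one_le_right hm.le
        rwa [one_le_div (by linarith)]
    _ = b ^ p * ((m : ℝ) ^ (p + 1) / (p + 1)) := by
        rw [mul_rpow hb hm.le, rpow_add_one hm.ne']; ring
    _ ≤ b ^ p * ∑ k ∈ Icc 1 m, (k : ℝ) ^ p :=
        mul_le_mul_of_nonneg_left (rpow_add_one_div_le_sum_Icc_rpow hp m) (by positivity)

lemma two_mul_mul_le_rpow_mul_one_add {L x p S m : ℝ} (hL : 0 < L) (hx : 0 ≤ x)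
    (hm : m ≤ (x / √L) ^ p * S) :
    2 * m * L ≤ L ^ (1 - p / 2) * (1 + 2 * x ^ p * S) := by
  calc 2 * m * L ≤ 2 * L * ((x / √L) ^ p * S) := by nlinarith
    _ = 2 * (L ^ (1 - p / 2) * x ^ p) * S := by rw [rpow_one_sub_half_mul_rpow hL hx]; ring
    _ ≤ L ^ (1 - p / 2) * (1 + 2 * x ^ p * S) := by nlinarith [rpow_pos_of_pos hL (1 - p / 2)]

lemma pi_mul_log_pi_div_two_le : π * log (π / 2) ≤ (1 + π) * log 2 / 2 := by
  have hcube : 3 * log (π / 2) ≤ 2 * log 2 + (π ^ 3 / 32 - 1) := by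
    have h := log_le_sub_one_of_pos (x := π ^ 3 / 32) (by positivity)
    have h' : log ((π / 2) ^ 3) = log (2 ^ 2) + log (π ^ 3 / 32) := by
      rw [← log_mul (by norm_num) (by positivity)]; ring_nf
    rw [log_pow, log_pow] at h'
    push_cast at h'
    linarith
  have hπ3 : π ^ 3 ≤ 3.1416 ^ 3 := pow_le_pow_left₀ pi_pos.le pi_lt_d4.le 3
  nlinarith [pi_gt_d4, pi_lt_d4, log_two_gt_d9, log_two_lt_d9]

lemma one_add_pi_mul_sqrt_le {L p : ℝ} (hL : 2 ≤ L) (hp : p ≤ 1) :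
    (1 + π) * √L ≤ L ^ (1 - p / 2) * (1 + 2 * (π / 2) ^ p) := by
  have hL0 : 0 < L := by linarith
  have hlogL : log 2 ≤ log L := log_le_log two_pos hL
  have htangent := add_le_mul_exp_add_mul_exp (t := 1 - p) zero_le_one pi_pos.le
    (a₁ := log L / 2) (a₂ := log L / 2 - log (π / 2))
    (by nlinarith [pi_mul_log_pi_div_two_le, pi_pos]) (by linarith)
  have hsqrt : √L = exp (log L / 2) := by
    rw [sqrt_eq_rpow, rpow_def_of_pos hL0]; ring_nf
  rw [rpow_def_of_pos hL0, rpow_def_of_pos (by positivity), hsqrt]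
  set l := log (π / 2) with hl
  have hπ : π = 2 * exp l := by rw [hl, exp_log (by positivity)]; ring
  calc (1 + π) * exp (log L / 2)
      ≤ (1 * exp (log L / 2 * (1 - p)) + π * exp ((log L / 2 - l) * (1 - p)))
          * exp (log L / 2) := mul_le_mul_of_nonneg_right htangent (exp_pos _).le
    _ = exp (log L * (1 - p / 2)) * (1 + 2 * exp (l * p)) := by
      rw [hπ]
      simp only [mul_add, add_mul, one_mul, mul_one, mul_assoc, ← exp_add]
      ring_nf
      rw [← exp_add]

lemma log_pi_mul_five_halves_gt : 2.06 < log (π * (5 / 2)) := by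
  have h := natCast_mul_log_two_add_le_log 3 (x := π * (5 / 2)) (by positivity)
  have h8 : 2 ^ 3 / (π * (5 / 2)) < 1.0187 := by
    rw [div_lt_iff₀ (by positivity)]; nlinarith [pi_gt_d4]
  push_cast at h
  linarith [log_two_gt_d9]

lemma log_pi_mul_add_three_halves_gt {m : ℝ} (hm : 2 ≤ m) : 2.35 < log (π * (m + 3 / 2)) := by
  have h := natCast_mul_log_two_add_le_log 3 (x := π * (m + 3 / 2)) (by positivity)
  have h8 : 2 ^ 3 / (π * (m + 3 / 2)) < 0.7276 := by
    rw [div_lt_iff₀ (by positivity)]; nlinarith [pi_gt_d4]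
  push_cast at h
  linarith [log_two_gt_d9]

lemma one_le_pi_div_two_div_sqrt_log : 1 ≤ π / 2 / √(log (π * (2 + 3 / 2))) := by
  have hL := log_le_natCast_mul_log_two_add 3 (x := π * (2 + 3 / 2)) (by positivity)
  rw [one_le_div (sqrt_pos.2 (log_pos (by nlinarith [pi_gt_three]))), sqrt_le_left (by positivity)]
  push_cast at hL
  nlinarith [pi_gt_d4, pi_lt_d4, log_two_lt_d9]

lemma exp_one_le_pi_div_two_div_sqrt_log_mul {m : ℝ} (hm : 3 ≤ m) :
    exp 1 ≤ π / 2 / √(log (π * (m + 3 / 2))) * m := by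
  set L := log (π * (m + 3 / 2))
  have hL0 : 0 < L := log_pos (by nlinarith [pi_gt_three])
  have hL : L ≤ 1.67 + 0.3928 * m := by
    have h := log_le_natCast_mul_log_two_add 3 (x := π * (m + 3 / 2)) (by positivity)
    push_cast at h
    nlinarith [pi_lt_d4, log_two_lt_d9]
  have he : exp 1 ^ 2 ≤ 7.3892 := by nlinarith [exp_one_lt_d9, exp_pos 1]
  rw [div_mul_eq_mul_div, le_div_iff₀ (sqrt_pos.2 hL0), ← sq_le_sq₀ (by positivity) (by positivity),
    mul_pow, sq_sqrt hL0.le]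
  have hπ : 9.869 ≤ π ^ 2 := by nlinarith [pi_gt_d4]
  nlinarith [mul_le_mul he hL hL0.le (by norm_num), mul_le_mul_of_nonneg_right hπ (sq_nonneg m)]

lemma pi_mul_five_halves_lt {L : ℝ} (hL : 2.06 ≤ L) :
    π * (5 / 2) < 5 / 3 * √(2 / π) * ((1 + π) * √L) := by
  have hπ3 : π ^ 3 ≤ 3.1416 ^ 3 := pow_le_pow_left₀ pi_pos.le pi_lt_d4.le 3
  rw [show 5 / 3 * √(2 / π) * ((1 + π) * √L) = 5 / 3 * (1 + π) * (√(2 / π) * √L) by ring,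
    ← sqrt_mul' _ (by linarith)]
  apply lt_of_pow_lt_pow_left₀ 2 (by positivity)
  simp only [mul_pow]
  rw [sq_sqrt (by positivity), div_mul_eq_mul_div, mul_div_assoc', lt_div_iff₀ pi_pos]
  nlinarith [pi_gt_d4, pi_lt_d4]

lemma pi_mul_add_three_halves_lt {m L : ℝ} (hm : 2 ≤ m) (hL : 2.35 ≤ L) :
    π * (m + 3 / 2) < 5 / 3 * √(2 / π) * (2 * m * L) := by
  have hsqrt : 0.79 < √(2 / π) := by
    rw [lt_sqrt (by norm_num), lt_div_iff₀ pi_pos]; nlinarith [pi_lt_d4]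
  nlinarith [pi_lt_d4, mul_le_mul hsqrt.le hL (by norm_num) (sqrt_nonneg _)]

theorem Rm_gt_one {m : ℕ} (hm : 1 ≤ m) {p : ℝ} (hp : p ∈ Set.Ioo (0:ℝ) 1) :
    (5 / 3) * (π ^ (-(1:ℝ)/2) * (2:ℝ) ^ ((1:ℝ)/2 - p)) *
      (Real.log (π * (m + 3/2))) ^ (1 - p/2) / (π * (m + 3/2)) *
      ((2:ℝ) ^ p + 2 * π ^ p * ∑ k ∈ Finset.Icc 1 m, (k : ℝ) ^ p) > 1 := by
  obtain ⟨hp0, hp1⟩ := hp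
  set L := log (π * (m + 3 / 2))
  set S := ∑ k ∈ Icc 1 m, (k : ℝ) ^ p
  have hP : 0 < π * (m + 3 / 2) := by positivity
  have hR : 5 / 3 * (π ^ (-(1:ℝ)/2) * (2:ℝ) ^ ((1:ℝ)/2 - p)) * L ^ (1 - p / 2) /
      (π * (m + 3 / 2)) * ((2:ℝ) ^ p + 2 * π ^ p * S) =
      5 / 3 * √(2 / π) * (L ^ (1 - p / 2) * (1 + 2 * (π / 2) ^ p * S)) / (π * (m + 3 / 2)) := by
    linear_combination (5 / 3 * L ^ (1 - p / 2) / (π * (m + 3 / 2))) *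
      rpow_neg_half_mul_two_rpow_mul_add pi_pos p S
  rw [gt_iff_lt, hR, one_lt_div hP]
  obtain rfl | hm2 : m = 1 ∨ 2 ≤ m := by omega
  · have hS : S = 1 := by simp [S]
    have hL : 2.06 < L := by convert log_pi_mul_five_halves_gt using 3; norm_num
    calc π * ((1 : ℕ) + 3 / 2) = π * (5 / 2) := by norm_num
      _ < 5 / 3 * √(2 / π) * ((1 + π) * √L) := pi_mul_five_halves_lt hL.le
      _ ≤ 5 / 3 * √(2 / π) * (L ^ (1 - p / 2) * (1 + 2 * (π / 2) ^ p * S)) := by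
        rw [hS, mul_one]
        exact mul_le_mul_of_nonneg_left (one_add_pi_mul_sqrt_le (by linarith) hp1.le)
          (by positivity)
  · have hL : 2.35 < L := log_pi_mul_add_three_halves_gt (by exact_mod_cast hm2)
    have hmS : (m : ℝ) ≤ (π / 2 / √L) ^ p * S := by
      obtain rfl | hm3 : m = 2 ∨ 3 ≤ m := by omega
      · exact natCast_le_rpow_mul_sum_of_one_le
          (by simpa [L] using one_le_pi_div_two_div_sqrt_log) hp0.le 2
      · exact natCast_le_rpow_mul_sum_of_exp_one_le
          (exp_one_le_pi_div_two_div_sqrt_log_mul (by exact_mod_cast hm3)) (by positivity) hp0.le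
    calc π * (m + 3 / 2) < 5 / 3 * √(2 / π) * (2 * m * L) :=
          pi_mul_add_three_halves_lt (by exact_mod_cast hm2) hL.le
      _ ≤ 5 / 3 * √(2 / π) * (L ^ (1 - p / 2) * (1 + 2 * (π / 2) ^ p * S)) :=
        mul_le_mul_of_nonneg_left
          (two_mul_mul_le_rpow_mul_one_add (by linarith) (by positivity) hmS) (by positivity)
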